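/- arXiv:1811.08962 — 3 statements merged into one kernel-verified Lean document; each statement's English description precedes it below -/
import Mathlib

section
/- Suppose the box ∏_{i=1}^n [y_i, y_i+γ_i] is the union of finitely many boxes P₁, …, Pₘ, each belonging to 𝒫ₙ*. Then for any index k ∈ {1, …, n} and any 0 < ε < γ_k, there exist boxes Q₁, …, Qₘ, each belonging to 𝒫ₙ, whose union equals (∏_{i=1}^{k−1} [y_i, y_i+γ_i]) × [y_k+ε, y_k+γ_k] × (∏_{i=k+1}^{n} [y_i, y_i+γ_i]). -/
open scoped BigOperators

/-- `S` is a box of the family `𝒫ₙ`: an axis-parallel parallelotope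
`∏ᵢ [xᵢ, xᵢ + δᵢ]` with `δᵢ ≥ 0` and `∑ᵢ δᵢ < 1`. -/
def IsBoxP (n : ℕ) (S : Set (EuclideanSpace ℝ (Fin n))) : Prop :=
  ∃ x δ : Fin n → ℝ, (∀ i, 0 ≤ δ i) ∧ (∑ i, δ i) < 1 ∧
    S = {p : EuclideanSpace ℝ (Fin n) | ∀ i, p i ∈ Set.Icc (x i) (x i + δ i)}

/-- `S` is a box of the family `𝒫ₙ*`: an axis-parallel parallelotope
`∏ᵢ [xᵢ, xᵢ + δᵢ]` with `δᵢ ≥ 0` and `∑ᵢ δᵢ ≤ 1`. -/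
def IsBoxPStar (n : ℕ) (S : Set (EuclideanSpace ℝ (Fin n))) : Prop :=
  ∃ x δ : Fin n → ℝ, (∀ i, 0 ≤ δ i) ∧ (∑ i, δ i) ≤ 1 ∧
    S = {p : EuclideanSpace ℝ (Fin n) | ∀ i, p i ∈ Set.Icc (x i) (x i + δ i)}

/-! Stretching the `k`-th coordinate by the factor `μ = γₖ / (γₖ - ε) > 1` about the top
corner `y + γ` maps the target box onto the given one, so pulling the cover back along this map
covers the target by boxes whose `k`-th sides are divided by `μ`; every box of positive width in
direction `k` thereby gets side sum `< 1`. Boxes of width zero in direction `k` may be shrunk to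
points beforehand: the remaining boxes already cover, since their union is closed and, on each
line in direction `k`, misses at most the finitely many levels of the flat boxes. -/

open Set Function

section Boxes

variable {ι : Type*}

theorem setOf_forall_mem_Icc_eq_preimage_ofLp (l u : ι → ℝ) :
    {p : EuclideanSpace ℝ ι | ∀ i, p i ∈ Icc (l i) (u i)} = WithLp.ofLp ⁻¹' Icc l u := by
  ext p
  simp only [mem_preimage, mem_Icc, Pi.le_def, forall_and]
  rfl

theorem preimage_affine_Icc (c μ l u : ι → ℝ) (hμ : ∀ j, 0 < μ j) :
    (fun p => c + μ * (p - c)) ⁻¹' Icc l u = Icc (c + (l - c) / μ) (c + (u - c) / μ) := by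
  ext p
  simp only [mem_preimage, mem_Icc, Pi.le_def, ← forall_and]
  refine forall_congr' fun j => ?_
  simp only [Pi.add_apply, Pi.mul_apply, Pi.sub_apply, Pi.div_apply]
  refine and_congr ?_ ?_
  · rw [← sub_le_iff_le_add', ← div_le_iff₀' (hμ j), le_sub_iff_add_le']
  · rw [← le_sub_iff_add_le', ← le_div_iff₀' (hμ j), sub_le_iff_le_add']

theorem sum_div_lt_sum [Fintype ι] {δ μ : ι → ℝ} (hδ : ∀ j, 0 ≤ δ j) (hμ : ∀ j, 1 ≤ μ j)
    {k : ι} (hδk : 0 < δ k) (hμk : 1 < μ k) : ∑ j, δ j / μ j < ∑ j, δ j :=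
  Finset.sum_lt_sum (fun j _ => div_le_self (hδ j) (hμ j))
    ⟨k, Finset.mem_univ k, div_lt_self hδk hμk⟩

variable [DecidableEq ι] {κ : Type*} [Finite κ]

theorem Icc_subset_iUnion_Icc_of_lt {a b : ι → ℝ} {l u : κ → ι → ℝ} {k : ι} (hk : a k < b k)
    (hcover : Icc a b ⊆ ⋃ i, Icc (l i) (u i)) :
    Icc a b ⊆ ⋃ (i) (_ : l i k < u i k), Icc (l i) (u i) := by
  intro p hp
  let line : ℝ → ι → ℝ := fun t => update p k t
  have hclosed : IsClosed (line ⁻¹' ⋃ (i) (_ : l i k < u i k), Icc (l i) (u i)) :=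
    (isClosed_iUnion_of_finite fun i => isClosed_iUnion_of_finite fun _ => isClosed_Icc).preimage
      (continuous_const.update k continuous_id : Continuous line)
  have hgood : Ioo (a k) (b k) ∩ (range fun i => l i k)ᶜ ⊆
      line ⁻¹' ⋃ (i) (_ : l i k < u i k), Icc (l i) (u i) := by
    rintro t ⟨ht, htl⟩
    have hline : line t ∈ Icc a b := by
      constructor <;> intro j <;> rcases eq_or_ne j k with rfl | hj <;>
        simp [line, ht.1.le, ht.2.le, hp.1 _, hp.2 _, *]
    obtain ⟨i, hi⟩ := mem_iUnion.1 (hcover hline)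
    refine mem_iUnion₂.2 ⟨i, lt_of_not_ge fun hflat => htl ⟨i, ?_⟩, hi⟩
    have hik := And.intro (hi.1 k) (hi.2 k)
    simp only [line, update_self] at hik
    exact le_antisymm hik.1 (hik.2.trans hflat)
  have hdense : Dense (range fun i => l i k)ᶜ := (countable_range _).dense_compl ℝ
  have hIcc : Icc (a k) (b k) ⊆ line ⁻¹' ⋃ (i) (_ : l i k < u i k), Icc (l i) (u i) := by
    rw [← closure_Ioo hk.ne]
    exact closure_minimal (fun t ht => closure_minimal hgood hclosed
      (hdense.open_subset_closure_inter isOpen_Ioo ht)) hclosed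
  simpa [line] using hIcc ⟨hp.1 k, hp.2 k⟩

theorem Icc_eq_iUnion_Icc_collapse_flat {a b : ι → ℝ} {x δ : κ → ι → ℝ} {k : ι}
    (hk : a k < b k) (hδ : ∀ i, 0 ≤ δ i) (hcover : Icc a b = ⋃ i, Icc (x i) (x i + δ i)) :
    Icc a b = ⋃ i, Icc (x i) (x i + if 0 < δ i k then δ i else 0) := by
  refine subset_antisymm ((Icc_subset_iUnion_Icc_of_lt hk hcover.subset).trans ?_) ?_
  · exact iUnion₂_subset fun i hi => subset_iUnion_of_subset i <| by
      rw [if_pos ((lt_add_iff_pos_right _).1 hi)]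
  · refine iUnion_subset fun i => (Icc_subset_Icc_right ?_).trans (hcover ▸ subset_iUnion _ i)
    split_ifs <;> simp [hδ i]

theorem Icc_eq_iUnion_Icc_compress {a b : ι → ℝ} {x δ : κ → ι → ℝ} {k : ι}
    (hk : a k < b k) (hδ : ∀ i, 0 ≤ δ i) (hcover : Icc a b = ⋃ i, Icc (x i) (x i + δ i))
    {μ : ι → ℝ} (hμ : ∀ j, 0 < μ j) :
    Icc (b + (a - b) / μ) b =
      ⋃ i, Icc (b + (x i - b) / μ) (b + (x i - b) / μ + (if 0 < δ i k then δ i else 0) / μ) := by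
  have h := congrArg (preimage fun p => b + μ * (p - b))
    (Icc_eq_iUnion_Icc_collapse_flat hk hδ hcover)
  simp only [preimage_iUnion, preimage_affine_Icc _ _ _ _ hμ] at h
  convert h using 3 with i
  · funext j
    simp
  · congr 1
    funext j
    simp only [Pi.add_apply, Pi.sub_apply, Pi.div_apply]
    ring

end Boxes

theorem isBoxP_preimage_ofLp {n : ℕ} {x δ : Fin n → ℝ} (hδ : 0 ≤ δ) (hsum : ∑ i, δ i < 1) :
    IsBoxP n (WithLp.ofLp ⁻¹' Icc x (x + δ)) :=
  ⟨x, δ, hδ, hsum, (setOf_forall_mem_Icc_eq_preimage_ofLp _ _).symm⟩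

theorem compression_lemma_general (n m : ℕ) (y γ : Fin n → ℝ)
    (P : Fin m → Set (EuclideanSpace ℝ (Fin n)))
    (hP : ∀ i, IsBoxPStar n (P i))
    (hunion : {p : EuclideanSpace ℝ (Fin n) | ∀ i, p i ∈ Set.Icc (y i) (y i + γ i)} = ⋃ i, P i)
    (k : Fin n) (ε : ℝ) (hε : 0 < ε) (hεγ : ε < γ k) :
    ∃ Q : Fin m → Set (EuclideanSpace ℝ (Fin n)),
      (∀ i, IsBoxP n (Q i)) ∧
      (⋃ i, Q i) = {p : EuclideanSpace ℝ (Fin n) |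
        ∀ i, p i ∈ Set.Icc (if i = k then y k + ε else y i) (y i + γ i)} := by
  choose X Δ hΔ0 hΔsum hPeq using hP
  have hcover : Icc y (y + γ) = ⋃ i, Icc (X i) (X i + Δ i) := by
    refine preimage_injective.2 (WithLp.ofLp_surjective 2) ?_
    calc WithLp.ofLp ⁻¹' Icc y (y + γ) = ⋃ i, P i :=
          (setOf_forall_mem_Icc_eq_preimage_ofLp _ _).symm.trans hunion
      _ = ⋃ i, WithLp.ofLp ⁻¹' Icc (X i) (X i + Δ i) :=
          iUnion_congr fun i => (hPeq i).trans (setOf_forall_mem_Icc_eq_preimage_ofLp _ _)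
      _ = _ := preimage_iUnion.symm
  set μ : Fin n → ℝ := update 1 k (γ k / (γ k - ε))
  have hμk : 1 < μ k := by
    rw [show μ k = _ from update_self .., one_lt_div (by linarith)]
    linarith
  have hμ : ∀ j, 1 ≤ μ j := fun j => by
    rcases eq_or_ne j k with rfl | hj
    exacts [hμk.le, by simp [μ, hj]]
  have hcompressed := Icc_eq_iUnion_Icc_compress (by simpa using hε.trans hεγ) hΔ0 hcover
    fun j => one_pos.trans_le (hμ j)
  have hcorner : y + γ + (y - (y + γ)) / μ = fun i => if i = k then y k + ε else y i := by
    funext j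
    rcases eq_or_ne j k with rfl | hj
    · simp only [μ, Pi.add_apply, Pi.sub_apply, Pi.div_apply, update_self, if_pos]
      field_simp [(hε.trans hεγ).ne']
      ring
    · simp [μ, hj]
  refine ⟨_, fun i => isBoxP_preimage_ofLp ?_ ?_, by
    rw [← preimage_iUnion, ← hcompressed, hcorner, setOf_forall_mem_Icc_eq_preimage_ofLp]; rfl⟩
  · split_ifs
    exacts [fun j => div_nonneg (hΔ0 i j) (zero_le_one.trans (hμ j)), fun j => (zero_div (μ j)).ge]
  · split_ifs with hfat
    exacts [(sum_div_lt_sum (hΔ0 i) hμ hfat hμk).trans_le (hΔsum i), by simp]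

theorem compression_lemma (n m : ℕ) (y γ : Fin n → ℝ) (hγ : ∀ i, 0 ≤ γ i)
    (P : Fin m → Set (EuclideanSpace ℝ (Fin n)))
    (hP : ∀ i, IsBoxPStar n (P i))
    (hunion : {p : EuclideanSpace ℝ (Fin n) | ∀ i, p i ∈ Set.Icc (y i) (y i + γ i)} = ⋃ i, P i)
    (k : Fin n) (ε : ℝ) (hε : 0 < ε) (hεγ : ε < γ k) :
    ∃ Q : Fin m → Set (EuclideanSpace ℝ (Fin n)),
      (∀ i, IsBoxP n (Q i)) ∧
      (⋃ i, Q i) = {p : EuclideanSpace ℝ (Fin n) |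
        ∀ i, p i ∈ Set.Icc (if i = k then y k + ε else y i) (y i + γ i)} :=
  compression_lemma_general n m y γ P hP hunion k ε hε hεγ
end

section
/- The 2-skeleton B_{2,4} of the unit cube [0,1]⁴ can be covered by 88 boxes belonging to 𝒫₄*, and moreover these 88 boxes can be chosen so that no two of them have overlapping interiors (the interiors, taken within ℝ⁴, of any two distinct boxes of the cover are disjoint). -/
open scoped BigOperators

/-- The `(n-2)`-skeleton `B_{n-2,n}` of the unit cube `[0,1]ⁿ`: points of the cube
having at least two coordinates equal to `0` or `1`. -/
def skeletonTwo (n : ℕ) : Set (EuclideanSpace ℝ (Fin n)) :=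
  {p | (∀ i, p i ∈ Set.Icc (0 : ℝ) 1) ∧
    ∃ i j : Fin n, i ≠ j ∧ (p i = 0 ∨ p i = 1) ∧ (p j = 0 ∨ p j = 1)}

/-!
Every side of every box is one of the intervals `{0}`, `{1}`, `[0,1/4]`, `[3/4,1]`, `[0,1/2]`,
`[1/2,1]`, `[1/4,3/4]`. On a 2-face with free coordinates `m, q`, the strip `q ∈ [1/4,3/4]` is
covered by two flat boxes `[0,1/2] × [1/4,3/4]` and `[1/2,1] × [1/4,3/4]`; the four corners by
the sixteen cubes `∏ [0,1/4] or [3/4,1]` of side `1/4`; and the two remaining strips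
`m ∈ [1/4,3/4]` by three-dimensional boxes `[1/4,3/4] × [0 or 3/4, +1/4]² × point`. Such a box
serves the two faces on which `m` is free together with one of its two quarter coordinates;
orienting the edges of `K₄` as `0 → 1 → 2 → 0` and `i → 3` gives each of `0, 1, 2` out-degree two,
so `8 · 3 = 24` of them suffice, and `16 + 24 · 2 + 24 = 88`. Only the sixteen cubes are
full-dimensional, and they are pairwise disjoint.
-/

open Set

namespace SkeletonCover

inductive Side
  | pt (b : Bool)
  | quarter (b : Bool)
  | half (b : Bool)
  | mid

namespace Side

noncomputable def lo : Side → ℝ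
  | pt b => bif b then 1 else 0
  | quarter b => bif b then 3 / 4 else 0
  | half b => bif b then 1 / 2 else 0
  | mid => 1 / 4

noncomputable def len : Side → ℝ
  | pt _ => 0
  | quarter _ => 1 / 4
  | half _ => 1 / 2
  | mid => 1 / 2

noncomputable def toSet (s : Side) : Set ℝ := Icc s.lo (s.lo + s.len)

lemma len_nonneg (s : Side) : 0 ≤ s.len := by
  cases s <;> norm_num [len]

lemma exists_mem_pt {u : ℝ} (hu : u = 0 ∨ u = 1) : ∃ b, u ∈ (pt b).toSet := by
  rcases hu with rfl | rfl
  exacts [⟨false, by norm_num [toSet, lo, len]⟩, ⟨true, by norm_num [toSet, lo, len]⟩]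

lemma toSet_pt_subset_quarter (b : Bool) : (pt b).toSet ⊆ (quarter b).toSet := by
  cases b <;> exact Icc_subset_Icc (by norm_num [lo]) (by norm_num [lo, len])

lemma exists_mem_half {u : ℝ} (hu : u ∈ Icc 0 1) : ∃ b, u ∈ (half b).toSet := by
  rw [mem_Icc] at hu
  by_cases h : u ≤ 1 / 2
  · exact ⟨false, by simp only [toSet, lo, len, mem_Icc, cond_false]; constructor <;> linarith⟩
  · exact ⟨true, by simp only [toSet, lo, len, mem_Icc, cond_true]; constructor <;> linarith⟩

lemma exists_mem_quarter {u : ℝ} (hu : u ∈ Icc 0 1) (hmid : u ∉ mid.toSet) :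
    ∃ b, u ∈ (quarter b).toSet := by
  simp only [toSet, lo, len, mem_Icc, not_and_or, not_le] at hu hmid
  rcases hmid with h | h
  · exact ⟨false, by simp only [toSet, lo, len, mem_Icc, cond_false]; constructor <;> linarith⟩
  · exact ⟨true, by simp only [toSet, lo, len, mem_Icc, cond_true]; constructor <;> linarith⟩

lemma interior_toSet_pt (b : Bool) : interior (pt b).toSet = ∅ := by
  simp [toSet, len, interior_singleton]

lemma disjoint_toSet_quarter {b c : Bool} (h : b ≠ c) :
    Disjoint (quarter b).toSet (quarter c).toSet := by
  refine disjoint_left.2 fun u hb hc => ?_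
  cases b <;> cases c <;> simp only [ne_eq, not_true_eq_false] at h <;>
    simp only [toSet, lo, len, cond_true, cond_false, mem_Icc] at hb hc <;>
    linarith [hb.1, hb.2, hc.1, hc.2]

end Side

open Side

def sideBox {ι : Type*} (s : ι → Side) : Set (EuclideanSpace ℝ ι) :=
  {p | ∀ i, p i ∈ (s i).toSet}

lemma isBoxPStar_sideBox {n : ℕ} (s : Fin n → Side) (hs : ∑ i, (s i).len ≤ 1) :
    IsBoxPStar n (sideBox s) :=
  ⟨fun i => (s i).lo, fun i => (s i).len, fun i => (s i).len_nonneg, hs, rfl⟩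

lemma interior_sideBox_eq_empty {ι : Type*} [Fintype ι] {s : ι → Side} {i : ι} {b : Bool}
    (h : s i = pt b) : interior (sideBox s) = ∅ := by
  have hopen : IsOpenMap (EuclideanSpace.proj (𝕜 := ℝ) i) :=
    ContinuousLinearMap.isOpenMap (EuclideanSpace.proj (𝕜 := ℝ) i)
      fun x => ⟨WithLp.toLp 2 fun _ => x, rfl⟩
  have hsub : sideBox s ⊆ EuclideanSpace.proj i ⁻¹' (pt b).toSet := fun p hp => h ▸ hp i
  apply eq_empty_of_subset_empty
  calc interior (sideBox s) ⊆ EuclideanSpace.proj i ⁻¹' interior (pt b).toSet :=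
        (interior_mono hsub).trans hopen.interior_preimage_subset_preimage_interior
    _ = ∅ := by rw [interior_toSet_pt, preimage_empty]

lemma disjoint_sideBox {ι : Type*} {s t : ι → Side} (i : ι)
    (h : Disjoint (s i).toSet (t i).toSet) : Disjoint (sideBox s) (sideBox t) :=
  disjoint_left.2 fun _ hs ht => disjoint_left.1 h (hs i) (ht i)

lemma exists_mem_sideBox_of_face {ι : Type*} {P : ι → Fin 4 → Side} {m q f g : Fin 4}
    (hmqfg : ∀ i, i = m ∨ i = q ∨ i = f ∨ i = g)
    (hcenter : ∀ h b c, ∃ k, P k m = half h ∧ P k q = mid ∧ P k f = pt b ∧ P k g = pt c)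
    (hedge : ∀ b c d, ∃ k, P k m = mid ∧ P k q = quarter b ∧ P k f = quarter c ∧ P k g = pt d)
    (hvertex : ∀ v : Fin 4 → Bool, ∃ k, ∀ i, P k i = quarter (v i))
    {p : EuclideanSpace ℝ (Fin 4)} (hp : ∀ i, p i ∈ Icc (0 : ℝ) 1)
    (hf : p f = 0 ∨ p f = 1) (hg : p g = 0 ∨ p g = 1) :
    ∃ k, p ∈ sideBox (P k) := by
  have mem_of_four : ∀ {s : Fin 4 → Side}, p m ∈ (s m).toSet → p q ∈ (s q).toSet →
      p f ∈ (s f).toSet → p g ∈ (s g).toSet → p ∈ sideBox s := by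
    intro s hsm hsq hsf hsg i
    rcases hmqfg i with rfl | rfl | rfl | rfl <;> assumption
  obtain ⟨b, hb⟩ := exists_mem_pt hf
  obtain ⟨c, hc⟩ := exists_mem_pt hg
  by_cases hq : p q ∈ mid.toSet
  · obtain ⟨h, hh⟩ := exists_mem_half (hp m)
    obtain ⟨k, hkm, hkq, hkf, hkg⟩ := hcenter h b c
    exact ⟨k, mem_of_four (hkm ▸ hh) (hkq ▸ hq) (hkf ▸ hb) (hkg ▸ hc)⟩
  obtain ⟨d, hd⟩ := exists_mem_quarter (hp q) hq
  by_cases hm : p m ∈ mid.toSet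
  · obtain ⟨k, hkm, hkq, hkf, hkg⟩ := hedge d b c
    exact ⟨k, mem_of_four (hkm ▸ hm) (hkq ▸ hd) (hkf ▸ toSet_pt_subset_quarter b hb) (hkg ▸ hc)⟩
  have hquarter : ∀ i, ∃ v, p i ∈ (quarter v).toSet := by
    intro i
    rcases hmqfg i with rfl | rfl | rfl | rfl
    exacts [exists_mem_quarter (hp _) hm, ⟨d, hd⟩, ⟨b, toSet_pt_subset_quarter b hb⟩,
      ⟨c, toSet_pt_subset_quarter c hc⟩]
  choose v hv using hquarter
  obtain ⟨k, hk⟩ := hvertex v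
  exact ⟨k, fun i => (hk i).symm ▸ hv i⟩

abbrev BoxIndex := (Fin 4 → Bool) ⊕ (Fin 6 × Bool × Bool × Bool) ⊕ (Fin 3 × Bool × Bool × Bool)

/- Row `a` has `half` on `m` and `mid` on `q` for the `a`-th oriented edge `m → q` among
`0 → 1, 1 → 2, 2 → 0, 0 → 3, 1 → 3, 2 → 3`; row `m` of `edgePattern` has `quarter` on the two
out-neighbours of `m`. -/
def centerPattern (a : Fin 6) (h b c : Bool) : Fin 4 → Side :=
  ![![half h, mid, pt b, pt c],
    ![pt b, half h, mid, pt c],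
    ![mid, pt b, half h, pt c],
    ![half h, pt b, pt c, mid],
    ![pt b, half h, pt c, mid],
    ![pt b, pt c, half h, mid]] a

def edgePattern (m : Fin 3) (b c d : Bool) : Fin 4 → Side :=
  ![![mid, quarter b, pt c, quarter d],
    ![pt c, mid, quarter b, quarter d],
    ![quarter b, pt c, mid, quarter d]] m

def boxPattern : BoxIndex → Fin 4 → Side
  | .inl v => fun i => quarter (v i)
  | .inr (.inl (a, h, b, c)) => centerPattern a h b c
  | .inr (.inr (m, b, c, d)) => edgePattern m b c d

lemma sum_len_boxPattern (k : BoxIndex) : ∑ i, (boxPattern k i).len = 1 := by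
  rcases k with v | ⟨a, h, b, c⟩ | ⟨m, b, c, d⟩
  · norm_num [boxPattern, len]
  · fin_cases a <;>
      simp only [boxPattern, centerPattern, Fin.sum_univ_four, Fin.zero_eta, Fin.mk_one,
        Fin.reduceFinMk, Matrix.cons_val, Matrix.cons_val'] <;> norm_num [len]
  · fin_cases m <;>
      simp only [boxPattern, edgePattern, Fin.sum_univ_four, Fin.zero_eta, Fin.mk_one,
        Fin.reduceFinMk, Matrix.cons_val, Matrix.cons_val'] <;> norm_num [len]

lemma interior_sideBox_boxPattern_inr
    (k : (Fin 6 × Bool × Bool × Bool) ⊕ (Fin 3 × Bool × Bool × Bool)) :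
    interior (sideBox (boxPattern (.inr k))) = ∅ := by
  rcases k with ⟨a, h, b, c⟩ | ⟨m, b, c, d⟩
  · fin_cases a
    exacts [interior_sideBox_eq_empty (i := 2) rfl, interior_sideBox_eq_empty (i := 0) rfl,
      interior_sideBox_eq_empty (i := 1) rfl, interior_sideBox_eq_empty (i := 1) rfl,
      interior_sideBox_eq_empty (i := 0) rfl, interior_sideBox_eq_empty (i := 0) rfl]
  · fin_cases m
    exacts [interior_sideBox_eq_empty (i := 2) rfl, interior_sideBox_eq_empty (i := 0) rfl,
      interior_sideBox_eq_empty (i := 1) rfl]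

lemma interior_sideBox_boxPattern_inter {k l : BoxIndex} (hkl : k ≠ l) :
    interior (sideBox (boxPattern k)) ∩ interior (sideBox (boxPattern l)) = ∅ := by
  rcases k with v | k
  · rcases l with w | l
    · obtain ⟨i, hi⟩ := Function.ne_iff.1 fun hvw => hkl (congrArg Sum.inl hvw)
      exact ((disjoint_sideBox i (disjoint_toSet_quarter hi)).mono
        interior_subset interior_subset).inter_eq
    · rw [interior_sideBox_boxPattern_inr, inter_empty]
  · rw [interior_sideBox_boxPattern_inr, empty_inter]

lemma skeletonTwo_subset_iUnion_sideBox_boxPattern :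
    skeletonTwo 4 ⊆ ⋃ k, sideBox (boxPattern k) := by
  rintro p ⟨hp, i, j, hij, hi, hj⟩
  rw [mem_iUnion]
  wlog hlt : i < j generalizing i j
  · exact this j i hij.symm hj hi (lt_of_le_of_ne (not_lt.1 hlt) hij.symm)
  have hvertex (v : Fin 4 → Bool) : ∃ k, ∀ i, boxPattern k i = quarter (v i) :=
    ⟨.inl v, fun _ => rfl⟩
  fin_cases i <;> fin_cases j <;> try exact absurd hlt (by decide)
  · exact exists_mem_sideBox_of_face (m := 2) (q := 3) (f := 0) (g := 1) (by decide)
      (fun _ _ _ => ⟨.inr (.inl (5, _, _, _)), rfl, rfl, rfl, rfl⟩)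
      (fun _ _ _ => ⟨.inr (.inr (2, _, _, _)), rfl, rfl, rfl, rfl⟩) hvertex hp hi hj
  · exact exists_mem_sideBox_of_face (m := 1) (q := 3) (f := 2) (g := 0) (by decide)
      (fun _ _ _ => ⟨.inr (.inl (4, _, _, _)), rfl, rfl, rfl, rfl⟩)
      (fun _ _ _ => ⟨.inr (.inr (1, _, _, _)), rfl, rfl, rfl, rfl⟩) hvertex hp hj hi
  · exact exists_mem_sideBox_of_face (m := 1) (q := 2) (f := 3) (g := 0) (by decide)
      (fun _ _ _ => ⟨.inr (.inl (1, _, _, _)), rfl, rfl, rfl, rfl⟩)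
      (fun _ _ _ => ⟨.inr (.inr (1, _, _, _)), rfl, rfl, rfl, rfl⟩) hvertex hp hj hi
  · exact exists_mem_sideBox_of_face (m := 0) (q := 3) (f := 1) (g := 2) (by decide)
      (fun _ _ _ => ⟨.inr (.inl (3, _, _, _)), rfl, rfl, rfl, rfl⟩)
      (fun _ _ _ => ⟨.inr (.inr (0, _, _, _)), rfl, rfl, rfl, rfl⟩) hvertex hp hi hj
  · exact exists_mem_sideBox_of_face (m := 2) (q := 0) (f := 3) (g := 1) (by decide)
      (fun _ _ _ => ⟨.inr (.inl (2, _, _, _)), rfl, rfl, rfl, rfl⟩)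
      (fun _ _ _ => ⟨.inr (.inr (2, _, _, _)), rfl, rfl, rfl, rfl⟩) hvertex hp hj hi
  · exact exists_mem_sideBox_of_face (m := 0) (q := 1) (f := 3) (g := 2) (by decide)
      (fun _ _ _ => ⟨.inr (.inl (0, _, _, _)), rfl, rfl, rfl, rfl⟩)
      (fun _ _ _ => ⟨.inr (.inr (0, _, _, _)), rfl, rfl, rfl, rfl⟩) hvertex hp hj hi

end SkeletonCover

open SkeletonCover

theorem skeleton_cover_88_nonoverlapping :
    ∃ P : Fin 88 → Set (EuclideanSpace ℝ (Fin 4)),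
      (∀ i, IsBoxPStar 4 (P i)) ∧
      skeletonTwo 4 ⊆ ⋃ i, P i ∧
      ∀ i j, i ≠ j → interior (P i) ∩ interior (P j) = ∅ := by
  let e : BoxIndex ≃ Fin 88 := Fintype.equivFinOfCardEq rfl
  refine ⟨fun i => sideBox (boxPattern (e.symm i)),
    fun i => isBoxPStar_sideBox _ (sum_len_boxPattern _).le, ?_,
    fun i j hij => interior_sideBox_boxPattern_inter (e.symm.injective.ne hij)⟩
  refine skeletonTwo_subset_iUnion_sideBox_boxPattern.trans (iUnion_subset fun k => ?_)
  exact subset_iUnion_of_subset (e k) (by rw [e.symm_apply_apply])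
end

section
/- For every integer n ≥ 3, the (n−2)-skeleton B_{n−2,n} of the unit cube [0,1]ⁿ can be covered by 2n(n−1)(n−2)^{n−2} boxes belonging to 𝒫ₙ*. -/
open scoped BigOperators

/-!
Each codimension-two face of `[0,1]ⁿ` is a unit cube of dimension `n - 2`; cutting it into the
`(n - 2)^(n - 2)` grid cells of side `1/(n - 2)` gives boxes whose side lengths add up to `1`.
There are `4 · C(n, 2) = 2n(n - 1)` such faces.
-/

open Set
open scoped Finset

namespace SkeletonCover

lemma exists_fin_mem_Icc_div {m : ℕ} (hm : 0 < m) {y : ℝ} (hy : y ∈ Icc (0 : ℝ) 1) :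
    ∃ c : Fin m, y ∈ Icc ((c : ℝ) / m) ((c + 1) / m) := by
  have hm' : (0 : ℝ) < m := by exact_mod_cast hm
  refine ⟨⟨min ⌊y * m⌋₊ (m - 1), by omega⟩, ?_⟩
  simp only [mem_Icc, div_le_iff₀ hm', le_div_iff₀ hm']
  constructor
  · calc ((min ⌊y * m⌋₊ (m - 1) : ℕ) : ℝ) ≤ ⌊y * m⌋₊ := by exact_mod_cast min_le_left _ _
      _ ≤ y * m := Nat.floor_le (by nlinarith [hy.1])
  · rcases le_total ⌊y * m⌋₊ (m - 1) with h | h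
    · rw [min_eq_left h]
      exact (Nat.lt_floor_add_one _).le
    · rw [min_eq_right h, Nat.cast_sub hm, Nat.cast_one, sub_add_cancel]
      nlinarith [hy.2]

variable {n : ℕ}

def box (x δ : Fin n → ℝ) : Set (EuclideanSpace ℝ (Fin n)) :=
  {p | ∀ k, p k ∈ Icc (x k) (x k + δ k)}

/-- Corner of the cell of the face `{p | ∀ k ∈ s, p k = v k}` of `[0,1]ⁿ` whose free
coordinates lie in the grid intervals `[c k / m, (c k + 1) / m]`. -/
noncomputable def cellCorner (m : ℕ) (s : Finset (Fin n)) (v : s → Fin 2)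
    (c : {k // k ∉ s} → Fin m) (k : Fin n) : ℝ :=
  if h : k ∈ s then ((v ⟨k, h⟩ : ℕ) : ℝ) else ((c ⟨k, h⟩ : ℕ) : ℝ) / m

noncomputable def cellSide (m : ℕ) (s : Finset (Fin n)) (k : Fin n) : ℝ :=
  if k ∈ s then 0 else 1 / m

lemma sum_cellSide (m : ℕ) (s : Finset (Fin n)) :
    ∑ k, cellSide m s k = (#sᶜ : ℝ) / m := by
  simp [cellSide, Finset.sum_ite, div_eq_mul_inv, Finset.filter_notMem_eq_sdiff,
    Finset.compl_eq_univ_sdiff]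

abbrev CellIndex (n d m : ℕ) :=
  Σ s : {s : Finset (Fin n) // #s = d}, (s.1 → Fin 2) × ({k // k ∉ s.1} → Fin m)

lemma card_cellIndex (n d m : ℕ) :
    Fintype.card (CellIndex n d m) = n.choose d * 2 ^ d * m ^ (n - d) := by
  simp only [Fintype.card_sigma, Fintype.card_prod, Fintype.card_fun, Fintype.card_fin,
    Fintype.card_coe, Fintype.card_subtype_compl]
  rw [Finset.sum_congr rfl fun s _ => by rw [s.2], Finset.sum_const, Finset.card_univ,
    Fintype.card_finset_len, Fintype.card_fin, smul_eq_mul, mul_assoc]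

noncomputable def cell {d m : ℕ} (t : CellIndex n d m) : Set (EuclideanSpace ℝ (Fin n)) :=
  box (cellCorner m t.1 t.2.1 t.2.2) (cellSide m t.1)

lemma isBoxPStar_cell {d m : ℕ} (h : n - d ≤ m) (t : CellIndex n d m) :
    IsBoxPStar n (cell t) := by
  refine ⟨_, _, fun k => ?_, ?_, rfl⟩
  · unfold cellSide; split_ifs <;> positivity
  · rw [sum_cellSide, Finset.card_compl, Fintype.card_fin, t.1.2]
    rcases Nat.eq_zero_or_pos m with rfl | hm
    · simp
    · rw [div_le_one (by exact_mod_cast hm)]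
      exact_mod_cast h

lemma exists_mem_cell {d m : ℕ} (hm : 0 < m) {s : Finset (Fin n)} (hs : #s = d)
    {p : EuclideanSpace ℝ (Fin n)} (hp : ∀ k, p k ∈ Icc (0 : ℝ) 1)
    (hps : ∀ k ∈ s, p k = 0 ∨ p k = 1) :
    ∃ t : CellIndex n d m, p ∈ cell t := by
  have hv (k : s) : ∃ b : Fin 2, p k = (b : ℕ) := by
    rcases hps k k.2 with h | h
    exacts [⟨0, by simp [h]⟩, ⟨1, by simp [h]⟩]
  choose v hv using hv
  choose c hc using fun k : {k // k ∉ s} => exists_fin_mem_Icc_div hm (hp k)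
  refine ⟨⟨⟨s, hs⟩, v, c⟩, fun k => ?_⟩
  by_cases hk : k ∈ s
  · simp [cellCorner, cellSide, hk, ← hv ⟨k, hk⟩]
  · simpa [cellCorner, cellSide, hk, add_div] using hc ⟨k, hk⟩

lemma choose_two_mul_four (n : ℕ) : n.choose 2 * 2 ^ 2 = 2 * n * (n - 1) := by
  rw [Nat.choose_two_right, pow_two, ← mul_assoc,
    Nat.div_mul_cancel (Nat.even_mul_pred_self n).two_dvd]
  ring

end SkeletonCover

open SkeletonCover in
theorem skeleton_cover_star (n : ℕ) (hn : 3 ≤ n) :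
    ∃ P : Fin (2 * n * (n - 1) * (n - 2) ^ (n - 2)) → Set (EuclideanSpace ℝ (Fin n)),
      (∀ i, IsBoxPStar n (P i)) ∧ skeletonTwo n ⊆ ⋃ i, P i := by
  let e : CellIndex n 2 (n - 2) ≃ Fin (2 * n * (n - 1) * (n - 2) ^ (n - 2)) :=
    Fintype.equivFinOfCardEq (by rw [card_cellIndex, choose_two_mul_four])
  refine ⟨fun t => cell (e.symm t), fun t => isBoxPStar_cell le_rfl _, ?_⟩
  rintro p ⟨hp, i, j, hij, hi, hj⟩
  obtain ⟨t, hpt⟩ := exists_mem_cell (m := n - 2) (by omega) (Finset.card_pair hij) hp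
    (by simpa [or_imp, forall_and] using ⟨hi, hj⟩)
  exact mem_iUnion.2 ⟨e t, by rwa [e.symm_apply_apply]⟩
end
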